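/- The 5×5 real matrix M = [[−4,0,2√2,0,0],[0,−2,0,2,0],[−2√2,0,0,0,2√2],[0,−2,0,2,0],[0,0,−2√2,0,4]] satisfies M³ = 0, M² ≠ 0, and rank(M) = 3; hence its only eigenvalue is 0 with geometric multiplicity 2. -/

import Mathlib

open Matrix Real

/-! $M^2 = 8\,u w^{\mathsf T}$ has rank one, with $u = (1, 0, \sqrt2, 0, 1)$ and
$w = (1, 0, -\sqrt2, 0, 1)$, and $w^{\mathsf T} M = 0$, so $M^3 = 0$. The kernel of $M$ is spanned by
$(\sqrt2, 0, 2, 0, \sqrt2)$ and $(0, 1, 0, 1, 0)$, which gives rank $3$ by rank–nullity, and a nilpotent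
operator can only have the eigenvalue $0$. -/

noncomputable def M14 : Matrix (Fin 5) (Fin 5) ℝ :=
  !![-4, 0, 2 * Real.sqrt 2, 0, 0;
     0, -2, 0, 2, 0;
     -(2 * Real.sqrt 2), 0, 0, 0, 2 * Real.sqrt 2;
     0, -2, 0, 2, 0;
     0, 0, -(2 * Real.sqrt 2), 0, 4]

theorem Matrix.rank_add_finrank_ker_mulVecLin {m n K : Type*} [Fintype n] [Field K]
    (A : Matrix m n K) :
    A.rank + Module.finrank K (LinearMap.ker A.mulVecLin) = Fintype.card n := by
  rw [Matrix.rank, LinearMap.finrank_range_add_finrank_ker, Module.finrank_fintype_fun_eq_card]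

theorem Matrix.eq_zero_of_hasEigenvalue_of_isNilpotent {n R : Type*} [Fintype n] [DecidableEq n]
    [CommRing R] [IsDomain R] {A : Matrix n n R} (hA : IsNilpotent A) {μ : R}
    (hμ : Module.End.HasEigenvalue A.mulVecLin μ) : μ = 0 :=
  (hμ.isNilpotent_of_isNilpotent ((Matrix.isNilpotent_toLin'_iff A).mpr hA)).eq_zero

theorem M14_sq : M14 ^ 2 =
    !![8, 0, -(8 * √2), 0, 8;
       0, 0, 0, 0, 0;
       8 * √2, 0, -16, 0, 8 * √2;
       0, 0, 0, 0, 0;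
       8, 0, -(8 * √2), 0, 8] := by
  rw [sq]
  ext i j
  fin_cases i <;> fin_cases j <;> simp [M14, mul_apply, Fin.sum_univ_five] <;> ring_nf <;> norm_num

theorem M14_pow_three : M14 ^ 3 = 0 := by
  rw [pow_succ, M14_sq]
  ext i j
  fin_cases i <;> fin_cases j <;> simp [M14, mul_apply, Fin.sum_univ_five] <;> ring_nf <;> norm_num

theorem M14_sq_ne_zero : M14 ^ 2 ≠ 0 := by
  rw [M14_sq]
  intro h
  simpa using congr_fun₂ h 0 0

noncomputable def M14KerBasis : Fin 2 → Fin 5 → ℝ :=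
  ![![√2, 0, 2, 0, √2], ![0, 1, 0, 1, 0]]

theorem M14_mulVec_kerBasis (i : Fin 2) : M14 *ᵥ M14KerBasis i = 0 := by
  ext j
  fin_cases i <;> fin_cases j <;> simp [M14, M14KerBasis, mulVec, dotProduct, Fin.sum_univ_five]
    <;> ring_nf

theorem linearIndependent_M14KerBasis : LinearIndependent ℝ M14KerBasis :=
  LinearIndependent.pair_iff.mpr fun _ _ hst =>
    ⟨by simpa using congr_fun hst 2, by simpa using congr_fun hst 1⟩

theorem ker_M14_mulVecLin :
    LinearMap.ker M14.mulVecLin = Submodule.span ℝ (Set.range M14KerBasis) := by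
  refine le_antisymm (fun x hx => ?_) (Submodule.span_le.mpr ?_)
  · have hx := congr_fun (LinearMap.mem_ker.mp hx)
    have h0 : -4 * x 0 + 2 * √2 * x 2 = 0 := by
      simpa [M14, mulVec, dotProduct, Fin.sum_univ_five] using hx 0
    have h1 : -2 * x 1 + 2 * x 3 = 0 := by
      simpa [M14, mulVec, dotProduct, Fin.sum_univ_five] using hx 1
    have h4 : -(2 * √2 * x 2) + 4 * x 4 = 0 := by
      simpa [M14, mulVec, dotProduct, Fin.sum_univ_five] using hx 4
    refine (Submodule.mem_span_range_iff_exists_fun ℝ).mpr ⟨![x 2 / 2, x 1], ?_⟩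
    ext j
    fin_cases j <;> simp [M14KerBasis] <;> linarith
  · rintro _ ⟨i, rfl⟩
    exact M14_mulVec_kerBasis i

theorem finrank_ker_M14_mulVecLin :
    Module.finrank ℝ (LinearMap.ker M14.mulVecLin) = 2 := by
  rw [ker_M14_mulVecLin, finrank_span_eq_card linearIndependent_M14KerBasis, Fintype.card_fin]

theorem stmt_14 :
    M14 ^ 3 = 0 ∧ M14 ^ 2 ≠ 0 ∧ M14.rank = 3 ∧
    (∀ μ : ℝ, Module.End.HasEigenvalue M14.mulVecLin μ → μ = 0) ∧
    Module.finrank ℝ ↥(LinearMap.ker M14.mulVecLin) = 2 := by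
  have h_rank := M14.rank_add_finrank_ker_mulVecLin
  rw [finrank_ker_M14_mulVecLin, Fintype.card_fin] at h_rank
  exact ⟨M14_pow_three, M14_sq_ne_zero, by omega,
    fun _ => eq_zero_of_hasEigenvalue_of_isNilpotent ⟨3, M14_pow_three⟩,
    finrank_ker_M14_mulVecLin⟩
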